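/- arXiv:0811.2097 — 3 statements merged into one kernel-verified Lean document; each statement's English description precedes it below -/
import Mathlib

section
/- If ∑_{k≥1} √k |x_k| < ∞ for a real sequence {x_k}, then n ∑_{k>n} x_k² → 0 as n → ∞. -/
/-- If `∑_{k≥1} √k |x_k| < ∞`, then `n ∑_{k>n} x_k² → 0` as `n → ∞`. -/
theorem tendsto_n_mul_tail_sq_zero (x : ℕ → ℝ)
    (hsum : Summable (fun k : ℕ => Real.sqrt (k + 1) * |x (k + 1)|)) :
    Filter.Tendsto (fun n : ℕ => (n : ℝ) * ∑' k : ℕ, (x (n + 1 + k)) ^ 2)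
      Filter.atTop (nhds 0) := by
  set a : ℕ → ℝ := fun k => Real.sqrt (k + 1) * |x (k + 1)| with ha
  have hanonneg : ∀ k, 0 ≤ a k := fun k => mul_nonneg (Real.sqrt_nonneg _) (abs_nonneg _)
  obtain ⟨C, hC⟩ : BddAbove (Set.range a) := hsum.tendsto_atTop_zero.bddAbove_range
  have hC' : ∀ k, a k ≤ C := fun k => hC ⟨k, rfl⟩
  have hasq : ∀ k : ℕ, a k ^ 2 = ((k : ℝ) + 1) * x (k + 1) ^ 2 := by
    intro k
    simp only [ha]
    rw [mul_pow, sq_abs, Real.sq_sqrt (by positivity)]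
  have ha2 : Summable (fun k => a k ^ 2) := by
    apply Summable.of_nonneg_of_le (fun k => sq_nonneg _) (fun k => ?_) (hsum.mul_left C)
    have : a k ^ 2 = a k * a k := sq (a k)
    rw [this]
    exact mul_le_mul_of_nonneg_right (hC' k) (hanonneg k)
  have hxkey : ∀ n k : ℕ, (n : ℝ) * x (n + 1 + k) ^ 2 ≤ a (k + n) ^ 2 := by
    intro n k
    rw [hasq]
    have he : n + 1 + k = k + n + 1 := by omega
    rw [he]
    apply mul_le_mul_of_nonneg_right _ (sq_nonneg _)
    push_cast
    linarith [Nat.cast_nonneg (α := ℝ) k]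
  have htail : ∀ n : ℕ, Summable (fun k => a (k + n) ^ 2) :=
    fun n => (summable_nat_add_iff n).2 ha2
  have hx2 : ∀ n : ℕ, Summable (fun k => x (n + 1 + k) ^ 2) := by
    intro n
    apply Summable.of_nonneg_of_le (fun k => sq_nonneg _) (fun k => ?_) (htail n)
    have he : n + 1 + k = k + n + 1 := by omega
    rw [he, hasq]
    nlinarith [sq_nonneg (x (k + n + 1)), Nat.cast_nonneg (α := ℝ) (k + n)]
  apply squeeze_zero (fun n => mul_nonneg (Nat.cast_nonneg n)
    (tsum_nonneg fun k => sq_nonneg _)) (g := fun n => ∑' k, a (k + n) ^ 2)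
  · intro n
    rw [← tsum_mul_left]
    exact Summable.tsum_le_tsum (fun k => hxkey n k) ((hx2 n).mul_left _) (htail n)
  · exact tendsto_sum_nat_add (fun k => a k ^ 2)
end

section
/- Consider two coupled urn processes with identical initial composition (x,y) and identical driving uniforms {U_n}: the first with reinforcements R_X(n), R_Y(n), the second with reinforcements R_X(n), R̃_Y(n) = R_Y(n) + (m_μ − m_ν), where m_μ > m_ν. Then for every n, X̃_n ≤ X_n and Ỹ_n ≥ Y_n, and consequently Z̃_n ≤ Z_n for all n. -/
lemma ratio_mono_aux {a b c d : ℝ} (ha : 0 ≤ a) (hd : 0 ≤ d)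
    (hac : a ≤ c) (hdb : d ≤ b) (h1 : 0 < a + b) (h2 : 0 < c + d) :
    a / (a + b) ≤ c / (c + d) := by
  rw [div_le_div_iff₀ h1 h2]
  have hc : 0 ≤ c := ha.trans hac
  nlinarith [mul_le_mul hac hdb hd hc]


open Classical in
/-- Coupling monotonicity: the urn with reinforcements `R_X, R̃_Y = R_Y + (m_μ − m_ν)`
(with `m_μ > m_ν`) and the same driving uniforms satisfies `X̃_n ≤ X_n`, `Ỹ_n ≥ Y_n`,
hence `Z̃_n ≤ Z_n` for all `n`. -/
theorem coupled_urn_monotone (β x y mμ mν : ℝ) (U RX RY : ℕ → ℝ)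
    (X Y Xt Yt : ℕ → ℝ)
    (hxy : 0 ≤ x) (hy : 0 ≤ y) (hx0 : 0 < x + y) (hm : mν < mμ)
    (hRX : ∀ n, RX n ∈ Set.Icc (0:ℝ) β) (hRY : ∀ n, RY n ∈ Set.Icc (0:ℝ) β)
    (hX0 : X 0 = x) (hY0 : Y 0 = y) (hXt0 : Xt 0 = x) (hYt0 : Yt 0 = y)
    (hX : ∀ n, X (n + 1) =
      X n + RX (n + 1) * (if U (n + 1) ≤ X n / (X n + Y n) then 1 else 0))
    (hY : ∀ n, Y (n + 1) =
      Y n + RY (n + 1) * (1 - if U (n + 1) ≤ X n / (X n + Y n) then 1 else 0))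
    (hXt : ∀ n, Xt (n + 1) =
      Xt n + RX (n + 1) * (if U (n + 1) ≤ Xt n / (Xt n + Yt n) then 1 else 0))
    (hYt : ∀ n, Yt (n + 1) =
      Yt n + (RY (n + 1) + (mμ - mν)) *
        (1 - if U (n + 1) ≤ Xt n / (Xt n + Yt n) then 1 else 0)) :
    ∀ n : ℕ, Xt n ≤ X n ∧ Y n ≤ Yt n ∧
      Xt n / (Xt n + Yt n) ≤ X n / (X n + Y n) := by
  have key : ∀ n : ℕ, 0 ≤ Xt n ∧ Xt n ≤ X n ∧ 0 ≤ Y n ∧ Y n ≤ Yt n ∧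
      0 < Xt n + Yt n ∧ 0 < X n + Y n := by
    intro n
    induction n with
    | zero =>
      refine ⟨by rw [hXt0]; exact hxy, by rw [hXt0, hX0], by rw [hY0]; exact hy,
        by rw [hY0, hYt0], by rw [hXt0, hYt0]; exact hx0, by rw [hX0, hY0]; exact hx0⟩
    | succ n ih =>
      obtain ⟨hXtn, hXle, hYn, hYle, hpt, hp⟩ := ih
      have hratio : Xt n / (Xt n + Yt n) ≤ X n / (X n + Y n) :=
        ratio_mono_aux hXtn hYn hXle hYle hpt hp
      have hRXn := hRX (n + 1)
      have hRYn := hRY (n + 1)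
      set δt : ℝ := if U (n + 1) ≤ Xt n / (Xt n + Yt n) then 1 else 0 with hδt
      set δ : ℝ := if U (n + 1) ≤ X n / (X n + Y n) then 1 else 0 with hδ
      have hδt01 : 0 ≤ δt ∧ δt ≤ 1 := by
        rw [hδt]; split <;> norm_num
      have hδ01 : 0 ≤ δ ∧ δ ≤ 1 := by
        rw [hδ]; split <;> norm_num
      have hdle : δt ≤ δ := by
        rw [hδt, hδ]
        split
        · rw [if_pos (le_trans (by assumption) hratio)]
        · split <;> norm_num
      have hX1 := hX n; have hY1 := hY n; have hXt1 := hXt n; have hYt1 := hYt n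
      rw [← hδt] at hXt1 hYt1
      rw [← hδ] at hX1 hY1
      refine ⟨?_, ?_, ?_, ?_, ?_, ?_⟩
      · rw [hXt1]; nlinarith [hRXn.1, hδt01.1]
      · rw [hXt1, hX1]; nlinarith [hRXn.1]
      · rw [hY1]; nlinarith [hRYn.1, hδ01.2]
      · rw [hY1, hYt1]
        have : RY (n + 1) * (1 - δ) ≤ (RY (n + 1) + (mμ - mν)) * (1 - δt) := by
          have h1 : (0:ℝ) ≤ 1 - δ := by linarith [hδ01.2]
          have h2 : RY (n + 1) ≤ RY (n + 1) + (mμ - mν) := by linarith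
          nlinarith [hRYn.1]
        linarith
      · rw [hXt1, hYt1]
        have h1 : 0 ≤ RX (n + 1) * δt := mul_nonneg hRXn.1 hδt01.1
        have h2 : 0 ≤ (RY (n + 1) + (mμ - mν)) * (1 - δt) :=
          mul_nonneg (by linarith [hRYn.1]) (by linarith [hδt01.2])
        linarith
      · rw [hX1, hY1]
        have h1 : 0 ≤ RX (n + 1) * δ := mul_nonneg hRXn.1 hδ01.1
        have h2 : 0 ≤ RY (n + 1) * (1 - δ) := mul_nonneg hRYn.1 (by linarith [hδ01.2])
        linarith
  intro n
  obtain ⟨hXtn, hXle, hYn, hYle, hpt, hp⟩ := key n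
  exact ⟨hXle, hYle, ratio_mono_aux hXtn hYn hXle hYle hpt hp⟩
end

section
/- Suppose m_μ = m_ν = m > 0 and that D_n/n → m almost surely, where D_n is the urn size with D_{n+1} = D_n + R_{n+1}, 0 ≤ R_{n+1} ≤ β. If additionally the i.i.d. reinforcements satisfy a large-deviation bound P(∑_{i=1}^n R_i ≤ nm − σ n^{5/8}) ≤ exp(−n^{1/4}/2)/n^{1/8} eventually for some σ > 0, then for any c, α ≥ 0, E[(c+D_n)^{−α}] · (c+D_0+mn)^α → 1 as n → ∞. -/
/-!
Write `X_n = c + D_n`, so that `E[X_n] = c + D₀ + mn =: a_n` and `X_n ≥ c + D₀ > 0`.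
Since `x ↦ x^{-α}` is convex on `(0, ∞)`, Jensen gives `E[X_n^{-α}] a_n^α ≥ 1`. For the upper
bound, split on the large-deviation event `F_n`: on `F_n` use `X_n^{-α} ≤ (c + D₀)^{-α}`, off it
`X_n ≥ a_n - σ n^{5/8}`. This gives
`E[X_n^{-α}] a_n^α ≤ (c + D₀)^{-α} P(F_n) a_n^α + (1 - σ n^{5/8}/a_n)^{-α}`,
where the first term vanishes because `P(F_n)` decays like `exp(-n^{1/4}/2)` while `a_n^α` grows
polynomially, and the second tends to `1` because `n^{5/8} = o(a_n)`.
-/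

open MeasureTheory ProbabilityTheory
open Filter Topology Set Real

theorem convexOn_rpow_neg {α : ℝ} (hα : 0 ≤ α) :
    ConvexOn ℝ (Ioi 0) fun x : ℝ => x ^ (-α) := by
  refine ⟨convex_Ioi 0, fun x (hx : 0 < x) y (hy : 0 < y) a b ha hb hab => ?_⟩
  simp only [smul_eq_mul]
  -- weighted AM-GM, once inside the decreasing power `(·) ^ (-α)` and once outside it
  calc (a * x + b * y) ^ (-α) ≤ (x ^ a * y ^ b) ^ (-α) :=
        rpow_le_rpow_of_nonpos (by positivity)
          (geom_mean_le_arith_mean2_weighted ha hb hx.le hy.le hab) (neg_nonpos.2 hα)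
    _ = (x ^ (-α)) ^ a * (y ^ (-α)) ^ b := by
        rw [mul_rpow (by positivity) (by positivity), ← rpow_mul hx.le, ← rpow_mul hy.le,
          ← rpow_mul hx.le, ← rpow_mul hy.le, mul_comm a, mul_comm b]
    _ ≤ a * x ^ (-α) + b * y ^ (-α) :=
        geom_mean_le_arith_mean2_weighted ha hb (by positivity) (by positivity) hab

theorem tendsto_rpow_mul_exp_neg_mul_rpow_atTop_nhds_zero (s : ℝ) {b r : ℝ} (hb : 0 < b)
    (hr : 0 < r) : Tendsto (fun x : ℝ => x ^ s * exp (-b * x ^ r)) atTop (𝓝 0) := by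
  refine ((tendsto_rpow_mul_exp_neg_mul_atTop_nhds_zero (s / r) b hb).comp
    (tendsto_rpow_atTop hr)).congr' ?_
  filter_upwards [eventually_ge_atTop 0] with x hx
  rw [Function.comp_apply, ← rpow_mul hx, mul_div_cancel₀ s hr.ne']

theorem tendsto_rpow_div_add_mul_atTop_nhds_zero {p b m : ℝ} (hp : p < 1) (hb : 0 ≤ b)
    (hm : 0 < m) : Tendsto (fun x : ℝ => x ^ p / (b + m * x)) atTop (𝓝 0) := by
  have hlim : Tendsto (fun x : ℝ => m⁻¹ * x ^ (-(1 - p))) atTop (𝓝 0) := by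
    simpa using (tendsto_rpow_neg_atTop (sub_pos.2 hp)).const_mul m⁻¹
  refine squeeze_zero' ?_ ?_ hlim
  · filter_upwards [eventually_ge_atTop 0] with x hx
    positivity
  · filter_upwards [eventually_gt_atTop 0] with x hx
    calc x ^ p / (b + m * x) ≤ x ^ p / (m * x) :=
          div_le_div_of_nonneg_left (by positivity) (by positivity) (by linarith)
      _ = m⁻¹ * x ^ (-(1 - p)) := by
          rw [neg_sub, rpow_sub hx, rpow_one]; field_simp

theorem tendsto_sub_rpow_neg_mul_rpow {ι : Type*} {l : Filter ι} {a s : ι → ℝ} {α : ℝ}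
    (ha : ∀ i, 0 < a i) (hs : Tendsto (fun i => s i / a i) l (𝓝 0)) :
    Tendsto (fun i => (a i - s i) ^ (-α) * a i ^ α) l (𝓝 1) := by
  have hlim : Tendsto (fun i => (1 - s i / a i) ^ (-α)) l (𝓝 1) := by
    simpa using ((tendsto_const_nhds (x := (1 : ℝ))).sub hs).rpow_const (p := -α)
      (Or.inl (by norm_num))
  refine hlim.congr' ?_
  filter_upwards [hs.eventually_lt_const one_pos] with i hi
  have hsub : a i - s i = a i * (1 - s i / a i) := by
    rw [mul_sub, mul_one, mul_div_cancel₀ _ (ha i).ne']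
  rw [hsub, mul_rpow (ha i).le (by linarith), mul_comm, ← mul_assoc, ← rpow_add (ha i)]
  simp

theorem tendsto_mul_add_mul_rpow_of_le_exp_neg_rpow_div {p : ℕ → ℝ} {b m α q r κ : ℝ}
    (hb : 0 ≤ b) (hm : 0 ≤ m) (hα : 0 ≤ α) (hr : 0 < r) (hκ : 0 < κ) (hp0 : ∀ n, 0 ≤ p n)
    (hp : ∀ᶠ n : ℕ in atTop, p n ≤ exp (-(n : ℝ) ^ r / κ) / (n : ℝ) ^ q) :
    Tendsto (fun n : ℕ => p n * (b + m * n) ^ α) atTop (𝓝 0) := by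
  have hlim := ((tendsto_rpow_mul_exp_neg_mul_rpow_atTop_nhds_zero (α - q) (inv_pos.2 hκ)
    hr).comp tendsto_natCast_atTop_atTop).const_mul ((b + m) ^ α)
  rw [mul_zero] at hlim
  refine squeeze_zero' (.of_forall fun n => mul_nonneg (hp0 n) (by positivity)) ?_ hlim
  filter_upwards [hp, eventually_ge_atTop 1] with n hpn hn
  have hn : (1 : ℝ) ≤ n := Nat.one_le_cast.2 hn
  calc p n * (b + m * n) ^ α ≤ exp (-(n : ℝ) ^ r / κ) / (n : ℝ) ^ q * ((b + m) * n) ^ α :=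
        mul_le_mul hpn (rpow_le_rpow (by positivity) (by nlinarith) hα) (by positivity)
          (by positivity)
    _ = (b + m) ^ α * ((n : ℝ) ^ (α - q) * exp (-κ⁻¹ * (n : ℝ) ^ r)) := by
        rw [mul_rpow (by positivity) (by positivity), rpow_sub (by positivity)]; ring_nf

theorem eq_add_sum_Icc_of_succ {M : Type*} [AddCommMonoid M] {x r : ℕ → M}
    (h : ∀ n, x (n + 1) = x n + r (n + 1)) (n : ℕ) : x n = x 0 + ∑ i ∈ Finset.Icc 1 n, r i := by
  induction n with
  | zero => simp
  | succ n ih => rw [h, ih, Finset.sum_Icc_succ_top (by omega), add_assoc]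

section

variable {Ω : Type*} {mΩ : MeasurableSpace Ω} {μ : Measure Ω} {X : Ω → ℝ} {d α : ℝ}

theorem const_le_integral_of_ae_le [IsProbabilityMeasure μ] (hX : Integrable X μ)
    (hXd : ∀ᵐ ω ∂μ, d ≤ X ω) : d ≤ ∫ ω, X ω ∂μ := by
  simpa using integral_mono_ae (integrable_const d) hX hXd

theorem integrable_rpow_neg_of_le [IsFiniteMeasure μ] (hX : AEMeasurable X μ) (hd : 0 < d)
    (hα : 0 ≤ α) (hXd : ∀ᵐ ω ∂μ, d ≤ X ω) : Integrable (fun ω => X ω ^ (-α)) μ := by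
  refine Integrable.of_mem_Icc 0 (d ^ (-α)) (hX.pow_const _) ?_
  filter_upwards [hXd] with ω hω
  exact ⟨rpow_nonneg (hd.le.trans hω) _, rpow_le_rpow_of_nonpos hd hω (neg_nonpos.2 hα)⟩

theorem one_le_integral_rpow_neg_mul_integral_rpow [IsProbabilityMeasure μ]
    (hX : Integrable X μ) (hd : 0 < d) (hα : 0 ≤ α) (hXd : ∀ᵐ ω ∂μ, d ≤ X ω) :
    1 ≤ (∫ ω, X ω ^ (-α) ∂μ) * (∫ ω, X ω ∂μ) ^ α := by
  have hmean : 0 < ∫ ω, X ω ∂μ := hd.trans_le (const_le_integral_of_ae_le hX hXd)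
  have jensen : (∫ ω, X ω ∂μ) ^ (-α) ≤ ∫ ω, X ω ^ (-α) ∂μ :=
    ((convexOn_rpow_neg hα).subset (Ici_subset_Ioi.2 hd) (convex_Ici d)).map_integral_le
      (fun x hx => (continuousAt_rpow_const x _ (Or.inl (hd.trans_le hx).ne')).continuousWithinAt)
      isClosed_Ici hXd hX (integrable_rpow_neg_of_le hX.aemeasurable hd hα hXd)
  calc 1 = (∫ ω, X ω ∂μ) ^ (-α) * (∫ ω, X ω ∂μ) ^ α := by
        rw [← rpow_add hmean, neg_add_cancel, rpow_zero]
    _ ≤ _ := mul_le_mul_of_nonneg_right jensen (rpow_nonneg hmean.le α)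

theorem integral_rpow_neg_le_measureReal_mul_add [IsProbabilityMeasure μ] {F : Set Ω} {b : ℝ}
    (hX : AEMeasurable X μ) (hF : MeasurableSet F) (hd : 0 < d) (hb : 0 < b) (hα : 0 ≤ α)
    (hXd : ∀ᵐ ω ∂μ, d ≤ X ω) (hXb : ∀ᵐ ω ∂μ, ω ∉ F → b ≤ X ω) :
    ∫ ω, X ω ^ (-α) ∂μ ≤ μ.real F * d ^ (-α) + b ^ (-α) := by
  have hpt : ∀ᵐ ω ∂μ, X ω ^ (-α) ≤ F.indicator (fun _ => d ^ (-α)) ω + b ^ (-α) := by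
    filter_upwards [hXd, hXb] with ω hωd hωb
    by_cases hω : ω ∈ F
    · rw [indicator_of_mem hω]
      have := rpow_le_rpow_of_nonpos hd hωd (neg_nonpos.2 hα)
      linarith [rpow_nonneg hb.le (-α)]
    · rw [indicator_of_notMem hω, zero_add]
      exact rpow_le_rpow_of_nonpos hb (hωb hω) (neg_nonpos.2 hα)
  have hind : Integrable (F.indicator fun _ => d ^ (-α)) μ := (integrable_const _).indicator hF
  calc ∫ ω, X ω ^ (-α) ∂μ ≤ ∫ ω, F.indicator (fun _ => d ^ (-α)) ω + b ^ (-α) ∂μ :=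
        integral_mono_ae (integrable_rpow_neg_of_le hX hd hα hXd)
          (hind.add (integrable_const _)) hpt
    _ = μ.real F * d ^ (-α) + b ^ (-α) := by
        rw [integral_add hind (integrable_const _), integral_indicator_const _ hF,
          integral_const, probReal_univ, smul_eq_mul, smul_eq_mul, one_mul]

theorem tendsto_integral_rpow_neg_mul_integral_rpow [IsProbabilityMeasure μ] {ι : Type*}
    {l : Filter ι} {X : ι → Ω → ℝ} {F : ι → Set Ω} {s : ι → ℝ} (hd : 0 < d) (hα : 0 ≤ α)
    (hX : ∀ i, Integrable (X i) μ) (hXd : ∀ i, ∀ᵐ ω ∂μ, d ≤ X i ω)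
    (hF : ∀ i, MeasurableSet (F i)) (hXF : ∀ i, ∀ᵐ ω ∂μ, ω ∉ F i → (∫ ω, X i ω ∂μ) - s i ≤ X i ω)
    (hs : Tendsto (fun i => s i / ∫ ω, X i ω ∂μ) l (𝓝 0))
    (hF0 : Tendsto (fun i => μ.real (F i) * (∫ ω, X i ω ∂μ) ^ α) l (𝓝 0)) :
    Tendsto (fun i => (∫ ω, X i ω ^ (-α) ∂μ) * (∫ ω, X i ω ∂μ) ^ α) l (𝓝 1) := by
  set a := fun i => ∫ ω, X i ω ∂μ
  have ha : ∀ i, 0 < a i := fun i => hd.trans_le (const_le_integral_of_ae_le (hX i) (hXd i))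
  have hupper : ∀ᶠ i in l, (∫ ω, X i ω ^ (-α) ∂μ) * a i ^ α ≤
      d ^ (-α) * (μ.real (F i) * a i ^ α) + (a i - s i) ^ (-α) * a i ^ α := by
    filter_upwards [hs.eventually_lt_const one_pos] with i hi
    have hb : 0 < a i - s i := by rw [div_lt_one (ha i)] at hi; linarith
    calc _ ≤ (μ.real (F i) * d ^ (-α) + (a i - s i) ^ (-α)) * a i ^ α :=
          mul_le_mul_of_nonneg_right (integral_rpow_neg_le_measureReal_mul_add
            (hX i).aemeasurable (hF i) hd hb hα (hXd i) (hXF i)) (rpow_nonneg (ha i).le α)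
      _ = _ := by ring
  refine tendsto_of_tendsto_of_tendsto_of_le_of_le' tendsto_const_nhds ?_
    (.of_forall fun i => one_le_integral_rpow_neg_mul_integral_rpow (hX i) hd hα (hXd i)) hupper
  simpa using (hF0.const_mul (d ^ (-α))).add (tendsto_sub_rpow_neg_mul_rpow ha hs)

theorem integral_const_add_sum_Icc [IsProbabilityMeasure μ] {R : ℕ → Ω → ℝ} {m : ℝ}
    (hR : ∀ i, Integrable (R i) μ) (hmean : ∀ i, ∫ ω, R i ω ∂μ = m) (x : ℝ) (n : ℕ) :
    ∫ ω, x + ∑ i ∈ Finset.Icc 1 n, R i ω ∂μ = x + m * n := by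
  rw [integral_add (integrable_const _) (integrable_finsetSum _ fun i _ => hR i),
    integral_finsetSum _ fun i _ => hR i]
  simp [hmean, mul_comm]

theorem tendsto_integral_rpow_neg_const_add_sum_mul_rpow [IsProbabilityMeasure μ]
    {R : ℕ → Ω → ℝ} {x m σ p q r κ : ℝ} (hx : 0 < x) (hm : 0 < m) (hα : 0 ≤ α) (hp : p < 1)
    (hr : 0 < r) (hκ : 0 < κ) (hmeas : ∀ i, Measurable (R i)) (hR : ∀ i, Integrable (R i) μ)
    (hR0 : ∀ i ω, 0 ≤ R i ω) (hmean : ∀ i, ∫ ω, R i ω ∂μ = m)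
    (hld : ∀ᶠ n : ℕ in atTop,
      μ.real {ω | ∑ i ∈ Finset.Icc 1 n, R i ω ≤ n * m - σ * (n : ℝ) ^ p} ≤
        exp (-(n : ℝ) ^ r / κ) / (n : ℝ) ^ q) :
    Tendsto (fun n : ℕ => (∫ ω, (x + ∑ i ∈ Finset.Icc 1 n, R i ω) ^ (-α) ∂μ) * (x + m * n) ^ α)
      atTop (𝓝 1) := by
  have hmean_sum := integral_const_add_sum_Icc hR hmean x
  refine (tendsto_integral_rpow_neg_mul_integral_rpow
    (X := fun n ω => x + ∑ i ∈ Finset.Icc 1 n, R i ω)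
    (F := fun n => {ω | ∑ i ∈ Finset.Icc 1 n, R i ω ≤ n * m - σ * (n : ℝ) ^ p})
    (s := fun n => σ * (n : ℝ) ^ p) hx hα ?_ ?_ ?_ ?_ ?_ ?_).congr fun n => by rw [hmean_sum]
  · exact fun n => (integrable_const x).add (integrable_finsetSum _ fun i _ => hR i)
  · exact fun n => ae_of_all _ fun ω =>
      le_add_of_nonneg_right (Finset.sum_nonneg fun i _ => hR0 i ω)
  · exact fun n => measurableSet_le (Finset.measurable_sum _ fun i _ => hmeas i) measurable_const
  · refine fun n => ae_of_all _ fun ω hω => ?_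
    simp only [mem_ofPred_eq, not_le] at hω
    rw [hmean_sum]
    linarith
  · simp only [hmean_sum, mul_div_assoc]
    rw [← mul_zero σ]
    exact ((tendsto_rpow_div_add_mul_atTop_nhds_zero hp hx.le hm).comp
      tendsto_natCast_atTop_atTop).const_mul σ
  · simp only [hmean_sum]
    exact tendsto_mul_add_mul_rpow_of_le_exp_neg_rpow_div hx.le hm.le hα hr hκ
      (fun n => measureReal_nonneg) hld

end

theorem urn_size_moment_asymptotics_general {Ω : Type*} {mΩ : MeasurableSpace Ω}
    {P : Measure Ω} [IsProbabilityMeasure P] (β m D₀ σ : ℝ)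
    (hm : 0 < m) (hD₀ : 0 < D₀)
    (R : ℕ → Ω → ℝ) (D : ℕ → Ω → ℝ)
    (hmeas : ∀ n, Measurable (R n))
    (hrange : ∀ n, ∀ ω, R n ω ∈ Set.Icc (0:ℝ) β)
    (hmean : ∀ n, ∫ ω, R n ω ∂P = m)
    (hD0 : ∀ ω, D 0 ω = D₀)
    (hrec : ∀ n, ∀ ω, D (n + 1) ω = D n ω + R (n + 1) ω)
    (hld : ∀ᶠ n : ℕ in Filter.atTop,
      P {ω | ∑ i ∈ Finset.Icc 1 n, R i ω ≤ n * m - σ * (n : ℝ) ^ ((5:ℝ)/8)} ≤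
        ENNReal.ofReal (Real.exp (-(n : ℝ) ^ ((1:ℝ)/4) / 2) / (n : ℝ) ^ ((1:ℝ)/8))) :
    ∀ c α : ℝ, 0 ≤ c → 0 ≤ α →
      Filter.Tendsto
        (fun n : ℕ => (∫ ω, (c + D n ω) ^ (-α) ∂P) * (c + D₀ + m * n) ^ α)
        Filter.atTop (nhds 1) := by
  intro c α hc hα
  have hD : ∀ n ω, c + D n ω = c + D₀ + ∑ i ∈ Finset.Icc 1 n, R i ω := fun n ω => by
    rw [eq_add_sum_Icc_of_succ (x := (D · ω)) (r := (R · ω)) (fun k => hrec k ω) n, hD0,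
      add_assoc]
  simp_rw [hD]
  exact tendsto_integral_rpow_neg_const_add_sum_mul_rpow (by linarith) hm hα (by norm_num)
    (by norm_num) two_pos hmeas
    (fun i => .of_mem_Icc 0 β (hmeas i).aemeasurable (ae_of_all _ (hrange i)))
    (fun i ω => (hrange i ω).1) hmean
    (hld.mono fun n hn => ENNReal.toReal_le_of_le_ofReal (by positivity) hn)

/-- Lemma 4.3 upper asymptotics: if `D_{n+1} = D_n + R_{n+1}` with i.i.d. reinforcements
in `[0,β]` of mean `m > 0`, `D_n/n → m` a.s., and the large-deviation bound
`P(∑_{i=1}^n R_i ≤ nm − σ n^{5/8}) ≤ exp(−n^{1/4}/2)/n^{1/8}` holds eventually, then for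
any `c, α ≥ 0`, `E[(c+D_n)^{−α}] (c+D₀+mn)^α → 1`. -/
theorem urn_size_moment_asymptotics {Ω : Type*} {mΩ : MeasurableSpace Ω}
    {P : Measure Ω} [IsProbabilityMeasure P] (β m D₀ σ : ℝ)
    (hβ : 0 < β) (hm : 0 < m) (hD₀ : 0 < D₀) (hσ : 0 < σ)
    (R : ℕ → Ω → ℝ) (D : ℕ → Ω → ℝ)
    (hmeas : ∀ n, Measurable (R n))
    (hindep : iIndepFun R P)
    (hident : ∀ n, Measure.map (R n) P = Measure.map (R 1) P)
    (hrange : ∀ n, ∀ ω, R n ω ∈ Set.Icc (0:ℝ) β)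
    (hmean : ∀ n, ∫ ω, R n ω ∂P = m)
    (hD0 : ∀ ω, D 0 ω = D₀)
    (hrec : ∀ n, ∀ ω, D (n + 1) ω = D n ω + R (n + 1) ω)
    (hlln : ∀ᵐ ω ∂P, Filter.Tendsto (fun n : ℕ => D n ω / n) Filter.atTop (nhds m))
    (hld : ∀ᶠ n : ℕ in Filter.atTop,
      P {ω | ∑ i ∈ Finset.Icc 1 n, R i ω ≤ n * m - σ * (n : ℝ) ^ ((5:ℝ)/8)} ≤
        ENNReal.ofReal (Real.exp (-(n : ℝ) ^ ((1:ℝ)/4) / 2) / (n : ℝ) ^ ((1:ℝ)/8))) :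
    ∀ c α : ℝ, 0 ≤ c → 0 ≤ α →
      Filter.Tendsto
        (fun n : ℕ => (∫ ω, (c + D n ω) ^ (-α) ∂P) * (c + D₀ + m * n) ^ α)
        Filter.atTop (nhds 1) :=
  urn_size_moment_asymptotics_general (mΩ := mΩ) β m D₀ σ hm hD₀ R D hmeas hrange hmean hD0 hrec hld
end
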